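/- Let n, m ≥ 1 and let A_1, …, A_m be n×n real matrices. Define B by B_{ij} = max_{1≤l≤m} max((A_l)_{ij}, −(A_l)_{ji}) and let μ = λ(B) be the maximum cycle mean of B. Then the minimum over all vectors x ∈ ℝ^n of max_{1≤l≤m} max_{i,j} |(A_l)_{ij} − (x_i − x_j)| equals μ, and the minimum is attained. -/

import Mathlib

open scoped BigOperators

noncomputable section

/-- The max-times spectral radius (maximum geometric cycle mean) of a
nonnegative `n × n` real matrix. -/
def mtSpecRad {n : ℕ} (A : Matrix (Fin n) (Fin n) ℝ) : ℝ :=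
  sSup { r : ℝ | ∃ (k : ℕ) (hk : 0 < k), k ≤ n ∧ ∃ f : Fin k → Fin n,
    r = (∏ t : Fin k, A (f t) (f ⟨((t : ℕ) + 1) % k, Nat.mod_lt _ hk⟩)) ^ ((k : ℝ)⁻¹) }

/-- The maximum cycle mean of a real `n × n` matrix (max-plus spectral radius). -/
def mpCycleMean {n : ℕ} (A : Matrix (Fin n) (Fin n) ℝ) : ℝ :=
  sSup { r : ℝ | ∃ (k : ℕ) (hk : 0 < k), k ≤ n ∧ ∃ f : Fin k → Fin n,
    r = (∑ t : Fin k, A (f t) (f ⟨((t : ℕ) + 1) % k, Nat.mod_lt _ hk⟩)) / (k : ℝ) }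

/-- Max-times matrix product. -/
def mtMul {n : ℕ} (A B : Matrix (Fin n) (Fin n) ℝ) : Matrix (Fin n) (Fin n) ℝ :=
  Matrix.of fun i j => ⨆ k : Fin n, A i k * B k j

/-- Max-times matrix powers, with `A^{⊗0} = I`. -/
def mtPow {n : ℕ} (A : Matrix (Fin n) (Fin n) ℝ) : ℕ → Matrix (Fin n) (Fin n) ℝ
  | 0 => Matrix.of fun i j => if i = j then 1 else 0
  | (k + 1) => mtMul (mtPow A k) A

/-- Max-times Kleene star: entrywise maximum of `I, S, S^{⊗2}, …, S^{⊗(n-1)}`. -/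
def mtStar {n : ℕ} (S : Matrix (Fin n) (Fin n) ℝ) : Matrix (Fin n) (Fin n) ℝ :=
  Matrix.of fun i j => ⨆ k : Fin n, mtPow S (k : ℕ) i j

/-- Max-times matrix-vector product. -/
def mtVecMul {n : ℕ} (S : Matrix (Fin n) (Fin n) ℝ) (u : Fin n → ℝ) : Fin n → ℝ :=
  fun i => ⨆ j, S i j * u j

/-- Max-plus matrix product. -/
def mpMul {n : ℕ} (A B : Matrix (Fin n) (Fin n) ℝ) : Matrix (Fin n) (Fin n) ℝ :=
  Matrix.of fun i j => ⨆ k : Fin n, (A i k + B k j)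

/-- `mpPow A k` is the max-plus power `A^{⊗(k+1)}`. -/
def mpPow {n : ℕ} (A : Matrix (Fin n) (Fin n) ℝ) : ℕ → Matrix (Fin n) (Fin n) ℝ
  | 0 => A
  | (k + 1) => mpMul (mpPow A k) A

/-- Max-plus Kleene star: `S^*_{ii} = max(0, max_{1≤k≤n-1} (S^{⊗k})_{ii})` and
`S^*_{ij} = max_{1≤k≤n-1} (S^{⊗k})_{ij}` for `i ≠ j`. -/
def mpStar {n : ℕ} (S : Matrix (Fin n) (Fin n) ℝ) : Matrix (Fin n) (Fin n) ℝ :=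
  Matrix.of fun i j =>
    if i = j then max 0 (⨆ k : Fin (n - 1), mpPow S (k : ℕ) i j)
    else ⨆ k : Fin (n - 1), mpPow S (k : ℕ) i j

/-- Max-plus matrix-vector product. -/
def mpVecMul {n : ℕ} (S : Matrix (Fin n) (Fin n) ℝ) (x : Fin n → ℝ) : Fin n → ℝ :=
  fun i => ⨆ j, (S i j + x j)

/-- Chebyshev-like (max-times) distance between a nonnegative matrix `A` and the
rank-one reciprocal matrix with entries `x i / x j`. -/
def mtRho {n : ℕ} (A : Matrix (Fin n) (Fin n) ℝ) (x : Fin n → ℝ) : ℝ :=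
  max (⨆ p : Fin n × Fin n, A p.1 p.2 * x p.2 / x p.1)
    (sSup { r : ℝ | ∃ i j, 0 < A i j ∧ r = x i / (A i j * x j) })

/-- The alternating max-times product `A ⊗ C^{⊗ i₁} ⊗ A ⊗ C^{⊗ i₂} ⊗ ⋯ ⊗ A ⊗ C^{⊗ i_k}`. -/
def mtChain {n : ℕ} (A C : Matrix (Fin n) (Fin n) ℝ) :
    (k : ℕ) → (Fin k → ℕ) → Matrix (Fin n) (Fin n) ℝ
  | 0, _ => Matrix.of fun i j => if i = j then 1 else 0
  | (k + 1), f => mtMul (mtMul A (mtPow C (f 0))) (mtChain A C k (fun t => f t.succ))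

/-- The optimal value `θ` of the constrained max-times approximation problem. -/
def mtTheta {n : ℕ} (A C : Matrix (Fin n) (Fin n) ℝ) : ℝ :=
  max (mtSpecRad A)
    (sSup { r : ℝ | ∃ k : ℕ, 0 < k ∧ k ≤ n - 1 ∧ ∃ f : Fin k → ℕ,
      1 ≤ ∑ t, f t ∧ (∑ t, f t) ≤ n - k ∧
      r = (⨆ i, mtChain A C k f i i) ^ ((k : ℝ)⁻¹) })

/-!
Writing `E(x)` for the Chebyshev error of the potential `x`, one has `E(x) ≤ c` iff
`B i j ≤ c + x i - x j` for all `i, j`, because `(A_l)_{ij} - (x_i - x_j) ≥ -c` is the same as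
`-(A_l)_{ij} ≤ c + x_j - x_i`. Summing this along a closed walk telescopes the potential, so every
cycle mean of `B` is at most `E(x)`. Conversely, for `c = λ(B)` every cycle of `B - c` has
nonpositive weight, and the maximal weight of a walk of `B - c` of length `< n` starting at `i`
is a potential `x` with `B i j ≤ c + x i - x j`: a longer walk repeats a vertex, and cutting out
the repeated cycle shortens it without decreasing its weight.
-/

open Finset

namespace MaxPlus

variable {ι : Type*}

def walkWeight (C : Matrix ι ι ℝ) (p : ℕ → ι) (k : ℕ) : ℝ :=
  ∑ t ∈ range k, C (p t) (p (t + 1))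

lemma walkWeight_add (C : Matrix ι ι ℝ) (p : ℕ → ι) (a k : ℕ) :
    walkWeight C p (a + k) = walkWeight C p a + walkWeight C (fun t => p (a + t)) k := by
  simp only [walkWeight, sum_range_add, add_assoc]

lemma walkWeight_le_of_le_add_sub {C : Matrix ι ι ℝ} {c : ℝ} {x : ι → ℝ}
    (h : ∀ i j, C i j ≤ c + (x i - x j)) (p : ℕ → ι) (k : ℕ) :
    walkWeight C p k ≤ k * c + (x (p 0) - x (p k)) :=
  calc walkWeight C p k ≤ ∑ t ∈ range k, (c + (x (p t) - x (p (t + 1)))) :=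
        sum_le_sum fun t _ => h _ _
    _ = k * c + (x (p 0) - x (p k)) := by
        rw [sum_add_distrib, sum_range_sub' (fun t => x (p t))]
        simp

lemma exists_walkWeight_le_mul [Finite ι] (C : Matrix ι ι ℝ) :
    ∃ M, 0 ≤ M ∧ ∀ p k, walkWeight C p k ≤ k * M := by
  obtain ⟨M, hM⟩ := Finite.bddAbove_range fun q : ι × ι => C q.1 q.2
  refine ⟨max M 0, le_max_right _ _, fun p k => ?_⟩
  have hC (i j : ι) : C i j ≤ max M 0 + ((0 : ι → ℝ) i - (0 : ι → ℝ) j) := by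
    simpa using (hM ⟨(i, j), rfl⟩).trans (le_max_left M 0)
  simpa using walkWeight_le_of_le_add_sub hC p k

lemma exists_walkWeight_eq_add_cycle (C : Matrix ι ι ℝ) (p : ℕ → ι) {a d : ℕ}
    (h : p a = p (a + d)) (r : ℕ) :
    ∃ q : ℕ → ι, q 0 = p 0 ∧
      walkWeight C p (a + d + r) = walkWeight C q (a + r) + walkWeight C (fun t => p (a + t)) d := by
  set q : ℕ → ι := fun t => if t ≤ a then p t else p (t + d)
  have hprefix : walkWeight C q a = walkWeight C p a :=
    sum_congr rfl fun t ht => by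
      have ht : t < a := mem_range.mp ht
      simp [q, ht.le, Nat.succ_le_of_lt ht]
  have hsuffix : (fun t => q (a + t)) = fun t => p (a + d + t) := by
    funext t
    rcases t with _ | t
    · simp [q, h]
    · simp only [q, show ¬a + (t + 1) ≤ a by omega, if_false]
      congr 1
      omega
  refine ⟨q, by simp [q], ?_⟩
  rw [walkWeight_add C q, walkWeight_add C p (a + d), walkWeight_add C p a, hprefix, hsuffix]
  ring

lemma cycleMean_le_of_le_add_sub {C : Matrix ι ι ℝ} {c : ℝ} {x : ι → ℝ}
    (h : ∀ i j, C i j ≤ c + (x i - x j)) {k : ℕ} (hk : 0 < k) {p : ℕ → ι} (hp : p k = p 0) :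
    walkWeight C p k / k ≤ c := by
  have := walkWeight_le_of_le_add_sub h p k
  rw [hp, sub_self, add_zero] at this
  rwa [div_le_iff₀ (by exact_mod_cast hk), mul_comm]

variable [Fintype ι]

def NonposCycles (C : Matrix ι ι ℝ) : Prop :=
  ∀ d, 0 < d → d ≤ Fintype.card ι → ∀ p : ℕ → ι, p d = p 0 → walkWeight C p d ≤ 0

lemma exists_shorter_walk {C : Matrix ι ι ℝ}
    (hC : NonposCycles C)
    (p : ℕ → ι) :
    ∃ k < Fintype.card ι, ∃ q : ℕ → ι, q 0 = p 0 ∧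
      walkWeight C p (Fintype.card ι) ≤ walkWeight C q k := by
  set N := Fintype.card ι
  obtain ⟨s, t, hst, hrepeat⟩ :=
    Fintype.exists_ne_map_eq_of_card_lt (fun t : Fin (N + 1) => p t) (by simp [N])
  wlog hlt : s < t generalizing s t
  · exact this t s hst.symm hrepeat.symm (lt_of_le_of_ne (not_lt.mp hlt) hst.symm)
  have ht := t.isLt
  have hlt' : (s : ℕ) < t := hlt
  have hcycle : p s = p (s + (t - s)) := by rw [Nat.add_sub_cancel' hlt'.le]; exact hrepeat
  obtain ⟨q, hq0, hsplit⟩ := exists_walkWeight_eq_add_cycle C p hcycle (N - t)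
  rw [show (s : ℕ) + (t - s) + (N - t) = N by omega] at hsplit
  have hneg := hC (t - s) (by omega) (by omega) (fun u => p (s + u)) (by simpa using hcycle.symm)
  exact ⟨s + (N - t), by omega, q, hq0, by linarith⟩

def walkPotential (C : Matrix ι ι ℝ) (i : ι) : ℝ :=
  sSup {w | ∃ k < Fintype.card ι, ∃ p : ℕ → ι, p 0 = i ∧ w = walkWeight C p k}

lemma bddAbove_walkWeights (C : Matrix ι ι ℝ) (i : ι) :
    BddAbove {w | ∃ k < Fintype.card ι, ∃ p : ℕ → ι, p 0 = i ∧ w = walkWeight C p k} := by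
  obtain ⟨M, hM0, hM⟩ := exists_walkWeight_le_mul C
  refine ⟨Fintype.card ι * M, ?_⟩
  rintro _ ⟨k, hk, p, -, rfl⟩
  exact (hM p k).trans (by gcongr)

lemma walkWeight_le_walkPotential {C : Matrix ι ι ℝ}
    (hC : NonposCycles C)
    {k : ℕ} (hk : k ≤ Fintype.card ι) (p : ℕ → ι) :
    walkWeight C p k ≤ walkPotential C (p 0) := by
  rcases hk.lt_or_eq with hk | rfl
  · exact le_csSup (bddAbove_walkWeights C _) ⟨k, hk, p, rfl, rfl⟩
  · obtain ⟨k, hk, q, hq0, hle⟩ := exists_shorter_walk hC p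
    exact hle.trans (le_csSup (bddAbove_walkWeights C _) ⟨k, hk, q, hq0, rfl⟩)

lemma add_walkPotential_le {C : Matrix ι ι ℝ}
    (hC : NonposCycles C)
    (i j : ι) : C i j + walkPotential C j ≤ walkPotential C i := by
  have hcard : 0 < Fintype.card ι := Fintype.card_pos_iff.mpr ⟨i⟩
  rw [← le_sub_iff_add_le']
  refine csSup_le ⟨0, 0, hcard, fun _ => j, rfl, by simp [walkWeight]⟩ ?_
  rintro _ ⟨k, hk, p, rfl, rfl⟩
  let q : ℕ → ι := fun | 0 => i | t + 1 => p t
  have hcons : walkWeight C q (k + 1) = C i (p 0) + walkWeight C p k := by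
    simp [walkWeight, sum_range_succ', q, add_comm]
  have := walkWeight_le_walkPotential hC (Nat.succ_le_of_lt hk) q
  rw [hcons] at this
  linarith

def maxCycleMean (C : Matrix ι ι ℝ) : ℝ :=
  sSup {r | ∃ k, 0 < k ∧ k ≤ Fintype.card ι ∧ ∃ p : ℕ → ι, p k = p 0 ∧ r = walkWeight C p k / k}

lemma bddAbove_cycleMeans (C : Matrix ι ι ℝ) :
    BddAbove {r | ∃ k, 0 < k ∧ k ≤ Fintype.card ι ∧ ∃ p : ℕ → ι, p k = p 0 ∧
      r = walkWeight C p k / k} := by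
  obtain ⟨M, -, hM⟩ := exists_walkWeight_le_mul C
  refine ⟨M, ?_⟩
  rintro _ ⟨k, hk, -, p, -, rfl⟩
  rw [div_le_iff₀ (by exact_mod_cast hk), mul_comm]
  exact hM p k

lemma maxCycleMean_le_of_le_add_sub [Nonempty ι] {C : Matrix ι ι ℝ} {c : ℝ} {x : ι → ℝ}
    (h : ∀ i j, C i j ≤ c + (x i - x j)) : maxCycleMean C ≤ c := by
  inhabit ι
  refine csSup_le ⟨_, 1, one_pos, Fintype.card_pos, fun _ => default, rfl, rfl⟩ ?_
  rintro _ ⟨k, hk, -, p, hp, rfl⟩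
  exact cycleMean_le_of_le_add_sub h hk hp

lemma exists_le_add_sub_maxCycleMean (C : Matrix ι ι ℝ) :
    ∃ x : ι → ℝ, ∀ i j, C i j ≤ maxCycleMean C + (x i - x j) := by
  set μ := maxCycleMean C
  let D : Matrix ι ι ℝ := fun i j => C i j - μ
  have hD : NonposCycles D := by
    intro d hd hdn p hp
    have hmean : walkWeight C p d / d ≤ μ :=
      le_csSup (bddAbove_cycleMeans C) ⟨d, hd, hdn, p, hp, rfl⟩
    have hshift : walkWeight D p d = walkWeight C p d - d * μ := by
      simp [D, walkWeight, sum_sub_distrib]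
    rw [div_le_iff₀ (by exact_mod_cast hd)] at hmean
    linarith
  refine ⟨walkPotential D, fun i j => ?_⟩
  have := add_walkPotential_le hD i j
  simp only [D] at this
  linarith

end MaxPlus

open MaxPlus

lemma mpCycleMean_eq_maxCycleMean {n : ℕ} (B : Matrix (Fin n) (Fin n) ℝ) :
    mpCycleMean B = maxCycleMean B := by
  rw [mpCycleMean, maxCycleMean, Fintype.card_fin]
  congr 1
  ext r
  constructor
  · rintro ⟨k, hk, hkn, f, rfl⟩
    refine ⟨k, hk, hkn, fun t => f ⟨t % k, Nat.mod_lt _ hk⟩, by simp, ?_⟩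
    rw [walkWeight, ← Fin.sum_univ_eq_sum_range (fun t => B (f ⟨t % k, _⟩) (f ⟨(t + 1) % k, _⟩))]
    simp [Nat.mod_eq_of_lt]
  · rintro ⟨k, hk, hkn, p, hp, rfl⟩
    refine ⟨k, hk, hkn, fun t => p t, ?_⟩
    rw [walkWeight, ← Fin.sum_univ_eq_sum_range (fun t => B (p t) (p (t + 1)))]
    congr 1
    refine sum_congr rfl fun t _ => ?_
    rcases (show (t : ℕ) + 1 ≤ k from t.isLt).lt_or_eq with ht | ht
    · simp [Nat.mod_eq_of_lt ht]
    · simp only [ht, Nat.mod_self, hp]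

lemma iSup_abs_sub_le_iff {κ ι : Type*} [Finite κ] [Finite ι] [Nonempty κ] [Nonempty ι]
    (A : κ → Matrix ι ι ℝ) (x : ι → ℝ) (c : ℝ) :
    (⨆ l, ⨆ p : ι × ι, |A l p.1 p.2 - (x p.1 - x p.2)|) ≤ c ↔
      ∀ i j, (⨆ l, max (A l i j) (-(A l j i))) ≤ c + (x i - x j) := by
  simp only [ciSup_le_iff (Finite.bddAbove_range _), max_le_iff, Prod.forall]
  constructor
  · intro h i j l
    have hij := abs_le.mp (h l i j)
    have hji := abs_le.mp (h l j i)
    constructor <;> linarith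
  · intro h l i j
    have hij := h i j l
    have hji := h j i l
    rw [abs_le]
    constructor <;> linarith

/-- For real matrices `A_1, …, A_m` with
`B_{ij} = max_l max((A_l)_{ij}, −(A_l)_{ji})`, the minimum over `x ∈ ℝⁿ` of
`max_l max_{i,j} |(A_l)_{ij} − (x_i − x_j)|` equals the maximum cycle mean
`μ = λ(B)`, and it is attained. -/
theorem mp_cheb_multi_min {n m : ℕ} (hn : 1 ≤ n) (hm : 1 ≤ m)
    (A : Fin m → Matrix (Fin n) (Fin n) ℝ)
    (B : Matrix (Fin n) (Fin n) ℝ)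
    (hB : ∀ i j, B i j = ⨆ l : Fin m, max (A l i j) (-(A l j i)))
    (μ : ℝ) (hμ : μ = mpCycleMean B) :
    IsLeast { y : ℝ | ∃ x : Fin n → ℝ,
        y = ⨆ l : Fin m, ⨆ p : Fin n × Fin n, |A l p.1 p.2 - (x p.1 - x p.2)| } μ := by
  have : Nonempty (Fin n) := ⟨⟨0, hn⟩⟩
  have : Nonempty (Fin m) := ⟨⟨0, hm⟩⟩
  have herror (x : Fin n → ℝ) (c : ℝ) :
      (⨆ l, ⨆ p : Fin n × Fin n, |A l p.1 p.2 - (x p.1 - x p.2)|) ≤ c ↔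
        ∀ i j, B i j ≤ c + (x i - x j) := by
    simp only [hB]
    exact iSup_abs_sub_le_iff A x c
  have hlower (x : Fin n → ℝ) :
      μ ≤ ⨆ l, ⨆ p : Fin n × Fin n, |A l p.1 p.2 - (x p.1 - x p.2)| := by
    rw [hμ, mpCycleMean_eq_maxCycleMean]
    exact maxCycleMean_le_of_le_add_sub ((herror x _).mp le_rfl)
  obtain ⟨x, hx⟩ := exists_le_add_sub_maxCycleMean B
  rw [← mpCycleMean_eq_maxCycleMean, ← hμ] at hx
  exact ⟨⟨x, le_antisymm (hlower x) ((herror x μ).mpr hx)⟩, fun _ ⟨x, hy⟩ => hy ▸ hlower x⟩
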